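/- Estimates of the critical value for the non-coercive Hamiltonian: Let P ∈ D and let c ∈ ℝ be the critical value of the cell problem H(x, Du + P) = a on T^N. Then max{σ̲ m(|P|), σ̄ m₀} ≤ c ≤ σ̄ m(|P|) and c < σ̲. In particular, if σ̄ m₀ ≥ σ̲ then D = ∅. -/

import Mathlib

open Set Filter MeasureTheory

noncomputable section

abbrev Euc (N : ℕ) := EuclideanSpace ℝ (Fin N)

def intVec {N : ℕ} (z : Fin N → ℤ) : Euc N :=
  (EuclideanSpace.equiv (Fin N) ℝ).symm (fun i => (z i : ℝ))

def IsZPeriodic {N : ℕ} (u : Euc N → ℝ) : Prop :=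
  ∀ (x : Euc N) (z : Fin N → ℤ), u (x + intVec z) = u x

def IsZPeriodicH {N : ℕ} (H : Euc N → Euc N → ℝ) : Prop :=
  ∀ (x p : Euc N) (z : Fin N → ℤ), H (x + intVec z) p = H x p

def superDiff {N : ℕ} (u : Euc N → ℝ) (x : Euc N) : Set (Euc N) :=
  { q | ∃ φ : Euc N → ℝ, ContDiff ℝ 1 φ ∧ IsZPeriodic φ ∧
        (∀ y, u y - φ y ≤ u x - φ x) ∧ q = gradient φ x }

def subDiff {N : ℕ} (u : Euc N → ℝ) (x : Euc N) : Set (Euc N) :=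
  { q | ∃ φ : Euc N → ℝ, ContDiff ℝ 1 φ ∧ IsZPeriodic φ ∧
        (∀ y, u x - φ x ≤ u y - φ y) ∧ q = gradient φ x }

def IsCellSubsolution {N : ℕ} (H : Euc N → Euc N → ℝ) (P : Euc N) (a : ℝ) (u : Euc N → ℝ) : Prop :=
  ∀ x, ∀ q ∈ superDiff u x, H x (q + P) ≤ a

def IsCellSupersolution {N : ℕ} (H : Euc N → Euc N → ℝ) (P : Euc N) (a : ℝ) (u : Euc N → ℝ) : Prop :=
  ∀ x, ∀ q ∈ subDiff u x, a ≤ H x (q + P)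

def IsCellSolution {N : ℕ} (H : Euc N → Euc N → ℝ) (P : Euc N) (u : Euc N → ℝ) (a : ℝ) : Prop :=
  (∃ K : NNReal, LipschitzWith K u) ∧ IsZPeriodic u ∧
    IsCellSubsolution H P a u ∧ IsCellSupersolution H P a u

def IsCoerciveH {N : ℕ} (H : Euc N → Euc N → ℝ) : Prop :=
  ∀ C : ℝ, ∃ r : ℝ, ∀ x p : Euc N, r ≤ ‖p‖ → C ≤ H x p

/-!
At a global maximum (minimum) of `u` the zero vector is a super- (sub-)differential, which gives
`σ̲ m(|P|) ≤ c ≤ σ̄ m(|P|)`. Points where `u` has a super- or subdifferential are dense: a global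
minimiser of `u + M W_a`, where `W_a` is a smooth periodic well vanishing only on `a + ℤ^N`, lies
close to `a` once `M` is large. As `H(x, p) ≥ σ(x) m₀`, the subsolution inequality on this dense
set and continuity of `σ` give `σ̄ m₀ ≤ c`. As subdifferentials of a `K`-Lipschitz `u` have norm
at most `K` and `m` is monotone, the supersolution inequality gives `c ≤ σ̲ m(K + |P|) < σ̲`.
-/

open Real

section GradientBound

variable {F : Type*} [NormedAddCommGroup F] [InnerProductSpace ℝ F] [CompleteSpace F]

theorem norm_gradient_le_of_forall_sub_le {φ : F → ℝ} {x : F} {K : ℝ} (hK : 0 ≤ K)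
    (hφ : DifferentiableAt ℝ φ x) (h : ∀ y, φ y - φ x ≤ K * ‖y - x‖) :
    ‖gradient φ x‖ ≤ K := by
  set g := gradient φ x
  -- Fermat's rule for `t ↦ φ (x + t • g) - K ‖g‖ t` at its maximum `t = 0` on `[0, ∞)`
  have hderiv : HasDerivAt (fun t : ℝ => φ (x + t • g) - K * ‖g‖ * t)
      (‖g‖ ^ 2 - K * ‖g‖) 0 := by
    have hline : HasDerivAt (fun t : ℝ => x + t • g) g 0 := by
      simpa using ((hasDerivAt_id (0 : ℝ)).smul_const g).const_add x
    have hcomp := (hφ.hasGradientAt.hasFDerivAt.comp_hasDerivAt_of_eq 0 hline (by simp))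
    have hsub := hcomp.sub ((hasDerivAt_id (0 : ℝ)).const_mul (K * ‖g‖))
    rw [InnerProductSpace.toDual_apply_apply, real_inner_self_eq_norm_sq, mul_one] at hsub
    exact hsub
  have hmax : IsMaxOn (fun t : ℝ => φ (x + t • g) - K * ‖g‖ * t) (Ici 0) 0 := by
    intro t (ht : 0 ≤ t)
    have := h (x + t • g)
    simp only [add_sub_cancel_left, norm_smul, Real.norm_eq_abs, abs_of_nonneg ht] at this
    simp only [Set.mem_ofPred_eq, zero_smul, add_zero, mul_zero, sub_zero]
    nlinarith
  have := hmax.localize.hasFDerivWithinAt_nonpos hderiv.hasFDerivAt.hasFDerivWithinAt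
    (y := 1) (mem_posTangentConeAt_of_segment_subset (by simp [Icc_subset_Ici_self]))
  simp only [ContinuousLinearMap.toSpanSingleton_apply, smul_eq_mul, one_mul, tsub_le_iff_right,
    zero_add] at this
  nlinarith [norm_nonneg g]

end GradientBound

section Periodic

variable {N : ℕ}

def unitCube (a : Euc N) : Set (Euc N) := {y | ∀ i, |y i - a i| ≤ 1 / 2}

theorem isCompact_unitCube (a : Euc N) : IsCompact (unitCube a) := by
  have : unitCube a = EuclideanSpace.equiv (Fin N) ℝ ⁻¹'
      Icc (fun i => a i - 1 / 2) (fun i => a i + 1 / 2) := by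
    ext y
    simp only [unitCube, abs_le, mem_ofPred_eq, mem_preimage, mem_Icc, Pi.le_def,
      PiLp.coe_continuousLinearEquiv, ← forall_and]
    exact forall_congr' fun i => and_congr (by constructor <;> intro <;> linarith)
      (by constructor <;> intro <;> linarith)
  rw [this]
  exact (EuclideanSpace.equiv (Fin N) ℝ).toHomeomorph.isCompact_preimage.mpr isCompact_Icc

theorem exists_add_intVec_mem_unitCube (a y : Euc N) : ∃ z, y + intVec z ∈ unitCube a :=
  ⟨fun i => round (a i - y i), fun i => by
    have : (y + intVec fun i => round (a i - y i)) i - a i = -(a i - y i - round (a i - y i)) := by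
      simp [intVec]; ring
    rw [this, abs_neg]
    exact abs_sub_round _⟩

theorem IsZPeriodic.neg {u : Euc N → ℝ} (hu : IsZPeriodic u) : IsZPeriodic (-u) :=
  fun x z => by simp [hu x z]

theorem IsZPeriodic.exists_mem_unitCube_forall_le {g : Euc N → ℝ} (hg : Continuous g)
    (hp : IsZPeriodic g) (a : Euc N) : ∃ x ∈ unitCube a, ∀ y, g x ≤ g y := by
  obtain ⟨x, hx, hmin⟩ := (isCompact_unitCube a).exists_isMinOn ⟨a, by simp [unitCube]⟩
    hg.continuousOn
  refine ⟨x, hx, fun y => ?_⟩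
  obtain ⟨z, hz⟩ := exists_add_intVec_mem_unitCube a y
  exact hp y z ▸ hmin hz

def periodicBump (a y : Euc N) : ℝ := ∑ i, (1 - cos (2 * π * (y i - a i)))

theorem periodicBump_self (a : Euc N) : periodicBump a a = 0 := by
  simp [periodicBump]

theorem isZPeriodic_periodicBump (a : Euc N) : IsZPeriodic (periodicBump a) := by
  intro y z
  refine Finset.sum_congr rfl fun i _ => ?_
  have : 2 * π * ((y + intVec z) i - a i) = 2 * π * (y i - a i) + (z i : ℤ) * (2 * π) := by
    simp [intVec]; ring
  rw [this, cos_add_int_mul_two_pi]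

theorem contDiff_periodicBump (a : Euc N) : ContDiff ℝ 1 (periodicBump a) :=
  ContDiff.sum fun _ _ => contDiff_const.sub <| contDiff_cos.comp <|
    contDiff_const.mul ((contDiff_piLp_apply 2).sub contDiff_const)

theorem continuous_periodicBump (a : Euc N) : Continuous (periodicBump a) :=
  (contDiff_periodicBump a).continuous

theorem periodicBump_pos {a y : Euc N} (hy : y ∈ unitCube a) (hne : y ≠ a) :
    0 < periodicBump a y := by
  obtain ⟨i, hi⟩ : ∃ i, y i ≠ a i := by
    by_contra! h
    exact hne (PiLp.ext h)
  refine Finset.sum_pos' (fun _ _ => sub_nonneg.mpr (cos_le_one _)) ⟨i, Finset.mem_univ i, ?_⟩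
  have hbound := abs_le.mp (hy i)
  have hcos : cos (2 * π * (y i - a i)) ≠ 1 := by
    rw [Ne, cos_eq_one_iff_of_lt_of_lt (by nlinarith [pi_pos]) (by nlinarith [pi_pos])]
    exact mul_ne_zero (by positivity) (sub_ne_zero.mpr hi)
  exact sub_pos.mpr ((cos_le_one _).lt_of_ne hcos)

theorem IsZPeriodic.exists_dist_lt_forall_add_periodicBump_le {g : Euc N → ℝ}
    (hg : Continuous g) (hp : IsZPeriodic g) (a : Euc N) {r : ℝ} (hr : 0 < r) :
    ∃ (M : ℝ) (x : Euc N), dist x a < r ∧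
      ∀ y, g x + M * periodicBump a x ≤ g y + M * periodicBump a y := by
  set S := unitCube a ∩ {y | r ≤ dist y a}
  obtain ⟨δ, hδ, hδS⟩ : ∃ δ, 0 < δ ∧ ∀ y ∈ S, δ ≤ periodicBump a y :=
    ((isCompact_unitCube a).inter_right (isClosed_le continuous_const
      (continuous_id.dist continuous_const))).exists_forall_le'
      (continuous_periodicBump a).continuousOn fun y hy =>
        periodicBump_pos hy.1 fun h => (h ▸ hy.2 : r ≤ dist a a).not_gt (by simpa using hr)
  obtain ⟨w, -, hw⟩ := hp.exists_mem_unitCube_forall_le hg a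
  set M := (g a - g w + 1) / δ
  have hMδ : M * δ = g a - g w + 1 := div_mul_cancel₀ _ hδ.ne'
  have hM : 0 < M := div_pos (by linarith [hw a]) hδ
  obtain ⟨x, hx, hmin⟩ := IsZPeriodic.exists_mem_unitCube_forall_le
    (g := fun y => g y + M * periodicBump a y)
    (hg.add (continuous_const.mul (continuous_periodicBump a)))
    (fun y z => by simp only [hp y z, isZPeriodic_periodicBump a y z]) a
  refine ⟨M, x, ?_, hmin⟩
  have hlt : M * periodicBump a x < M * δ := by
    have := hmin a
    rw [periodicBump_self, mul_zero, add_zero] at this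
    linarith [hw x]
  by_contra! hfar
  exact hlt.not_ge (mul_le_mul_of_nonneg_left (hδS x ⟨hx, hfar⟩) hM.le)

theorem dense_setOf_subDiff_nonempty {u : Euc N → ℝ} (hu : Continuous u) (hp : IsZPeriodic u) :
    Dense {x | (subDiff u x).Nonempty} := by
  refine Metric.dense_iff.mpr fun a r hr => ?_
  obtain ⟨M, x, hx, hmin⟩ := hp.exists_dist_lt_forall_add_periodicBump_le hu a hr
  refine ⟨x, hx, _, fun y => -M * periodicBump a y, contDiff_const.mul (contDiff_periodicBump a),
    fun y z => by simp only [isZPeriodic_periodicBump a y z], fun y => ?_, rfl⟩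
  linarith [hmin y]

theorem dense_setOf_superDiff_nonempty {u : Euc N → ℝ} (hu : Continuous u)
    (hp : IsZPeriodic u) : Dense {x | (superDiff u x).Nonempty} :=
  (dense_setOf_subDiff_nonempty hu.neg hp.neg).mono fun x hx => by
    obtain ⟨_, φ, hφ, hφp, hmin, -⟩ := hx
    refine ⟨_, -φ, hφ.neg, hφp.neg, fun y => ?_, rfl⟩
    simp only [Pi.neg_apply] at hmin ⊢
    linarith [hmin y]

theorem zero_mem_subDiff_of_forall_le {u : Euc N → ℝ} {x : Euc N} (h : ∀ y, u x ≤ u y) :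
    0 ∈ subDiff u x :=
  ⟨fun _ => 0, contDiff_const, fun _ _ => rfl, by simpa using h, (gradient_fun_const x 0).symm⟩

theorem zero_mem_superDiff_of_forall_le {u : Euc N → ℝ} {x : Euc N} (h : ∀ y, u y ≤ u x) :
    0 ∈ superDiff u x :=
  ⟨fun _ => 0, contDiff_const, fun _ _ => rfl, by simpa using h, (gradient_fun_const x 0).symm⟩

theorem norm_le_of_mem_subDiff {u : Euc N → ℝ} {K : NNReal} (hu : LipschitzWith K u)
    {x q : Euc N} (hq : q ∈ subDiff u x) : ‖q‖ ≤ K := by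
  obtain ⟨φ, hφ, -, hmin, rfl⟩ := hq
  refine norm_gradient_le_of_forall_sub_le K.coe_nonneg (hφ.differentiable one_ne_zero x)
    fun y => ?_
  have := hu.dist_le_mul y x
  rw [Real.dist_eq, dist_eq_norm] at this
  linarith [hmin y, le_abs_self (u y - u x)]

end Periodic

section CellProblem

variable {N : ℕ} {H : Euc N → Euc N → ℝ} {P : Euc N} {a : ℝ} {u : Euc N → ℝ}

theorem IsCellSubsolution.exists_le (hsub : IsCellSubsolution H P a u) (hu : Continuous u)
    (hp : IsZPeriodic u) : ∃ x, H x P ≤ a := by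
  obtain ⟨x, -, hx⟩ := hp.neg.exists_mem_unitCube_forall_le hu.neg 0
  have := hsub x 0 (zero_mem_superDiff_of_forall_le fun y => neg_le_neg_iff.mp (hx y))
  exact ⟨x, by rwa [zero_add] at this⟩

theorem IsCellSupersolution.exists_ge (hsup : IsCellSupersolution H P a u) (hu : Continuous u)
    (hp : IsZPeriodic u) : ∃ x, a ≤ H x P := by
  obtain ⟨x, -, hx⟩ := hp.exists_mem_unitCube_forall_le hu 0
  have := hsup x 0 (zero_mem_subDiff_of_forall_le hx)
  exact ⟨x, by rwa [zero_add] at this⟩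

theorem IsCellSubsolution.le_of_forall_le_apply (hsub : IsCellSubsolution H P a u)
    (hu : Continuous u) (hp : IsZPeriodic u) {g : Euc N → ℝ} (hg : Continuous g)
    (hgH : ∀ x p, g x ≤ H x p) (x : Euc N) : g x ≤ a := by
  have hclosure : closure {x | (superDiff u x).Nonempty} ⊆ {x | g x ≤ a} :=
    (isClosed_le hg continuous_const).closure_subset_iff.mpr
      fun x ⟨q, hq⟩ => (hgH x _).trans (hsub x q hq)
  rw [(dense_setOf_superDiff_nonempty hu hp).closure_eq] at hclosure
  exact hclosure (mem_univ x)

theorem IsCellSupersolution.le_of_forall_apply_le {K : NNReal}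
    (hsup : IsCellSupersolution H P a u) (hu : LipschitzWith K u) (hp : IsZPeriodic u)
    {g : Euc N → ℝ} (hg : Continuous g) (hHg : ∀ x q, ‖q‖ ≤ K → H x (q + P) ≤ g x)
    (x : Euc N) : a ≤ g x := by
  have hclosure : closure {x | (subDiff u x).Nonempty} ⊆ {x | a ≤ g x} :=
    (isClosed_le continuous_const hg).closure_subset_iff.mpr
      fun x ⟨q, hq⟩ => (hsup x q hq).trans (hHg x q (norm_le_of_mem_subDiff hu hq))
  rw [(dense_setOf_subDiff_nonempty hu.continuous hp).closure_eq] at hclosure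
  exact hclosure (mem_univ x)

end CellProblem

theorem critical_value_bounds {N : ℕ} {σ : Euc N → ℝ} {m : ℝ → ℝ}
    (hσc : Continuous σ) (hσpos : ∀ x, 0 < σ x)
    (hm01 : ∀ r : ℝ, 0 ≤ r → 0 < m r ∧ m r < 1) (hmono : MonotoneOn m (Ici 0))
    {σmax σmin : ℝ} (hσmax : IsGreatest (range σ) σmax) (hσmin : IsLeast (range σ) σmin)
    {P : Euc N} {u : Euc N → ℝ} {c : ℝ} (hsol : IsCellSolution (fun x p => σ x * m ‖p‖) P u c) :
    max (σmin * m ‖P‖) (σmax * m 0) ≤ c ∧ c ≤ σmax * m ‖P‖ ∧ c < σmin := by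
  obtain ⟨⟨K, hK⟩, hp, hsub, hsup⟩ := hsol
  have hmP := (hm01 _ (norm_nonneg P)).1.le
  obtain ⟨x₁, hx₁⟩ := hsub.exists_le hK.continuous hp
  obtain ⟨x₂, hx₂⟩ := hsup.exists_ge hK.continuous hp
  obtain ⟨xmax, rfl⟩ := hσmax.1
  obtain ⟨xmin, rfl⟩ := hσmin.1
  have hmax : σ xmax * m 0 ≤ c :=
    hsub.le_of_forall_le_apply hK.continuous hp (hσc.mul continuous_const) (fun x p =>
      mul_le_mul_of_nonneg_left (hmono self_mem_Ici (norm_nonneg p) (norm_nonneg p))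
        (hσpos x).le) xmax
  have hmin : c ≤ σ xmin * m (K + ‖P‖) :=
    hsup.le_of_forall_apply_le hK hp (hσc.mul continuous_const) (fun x q hq =>
      mul_le_mul_of_nonneg_left (hmono (norm_nonneg _) (mem_Ici.mpr (by positivity))
        ((norm_add_le q P).trans (by linarith))) (hσpos x).le) xmin
  refine ⟨max_le ?_ hmax, hx₂.trans ?_, hmin.trans_lt ?_⟩
  · exact (mul_le_mul_of_nonneg_right (hσmin.2 ⟨x₁, rfl⟩) hmP).trans hx₁
  · exact mul_le_mul_of_nonneg_right (hσmax.2 ⟨x₂, rfl⟩) hmP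
  · exact mul_lt_of_lt_one_right (hσpos xmin) (hm01 _ (by positivity)).2

theorem critical_value_estimates_noncoercive_general {N : ℕ}
    (σ : Euc N → ℝ) (m : ℝ → ℝ)
    (hσc : Continuous σ) (hσpos : ∀ x, 0 < σ x)
    (hm01 : ∀ r : ℝ, 0 ≤ r → 0 < m r ∧ m r < 1)
    (hmmono : StrictMonoOn m (Set.Ici 0))
    (σmax σmin : ℝ)
    (hσmax : IsGreatest (Set.range σ) σmax) (hσmin : IsLeast (Set.range σ) σmin) :
    (∀ (P : Euc N) (u : Euc N → ℝ) (c : ℝ),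
        IsCellSolution (fun x p => σ x * m ‖p‖) P u c →
        max (σmin * m ‖P‖) (σmax * m 0) ≤ c ∧ c ≤ σmax * m ‖P‖ ∧ c < σmin) ∧
    (σmin ≤ σmax * m 0 →
        { P : Euc N | ∃ (u : Euc N → ℝ) (a : ℝ),
            IsCellSolution (fun x p => σ x * m ‖p‖) P u a } = ∅) := by
  have bounds := fun (P : Euc N) (u : Euc N → ℝ) (c : ℝ) =>
    critical_value_bounds (P := P) (u := u) (c := c) hσc hσpos hm01 hmmono.monotoneOn hσmax hσmin
  refine ⟨bounds, fun hge => eq_empty_of_forall_notMem fun P ⟨u, a, hsol⟩ => ?_⟩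
  obtain ⟨hlower, -, hupper⟩ := bounds P u a hsol
  linarith [le_of_max_le_right hlower]

/-- Estimates of the critical value for the non-coercive
Hamiltonian `H(x,p) = σ(x) m(|p|)`, and emptiness of the solvability set
when `σ̄ m₀ ≥ σ̲`. -/
theorem critical_value_estimates_noncoercive {N : ℕ} (hN : 1 ≤ N)
    (σ : Euc N → ℝ) (m : ℝ → ℝ) (L : NNReal)
    (hσc : Continuous σ) (hσp : IsZPeriodic σ) (hσpos : ∀ x, 0 < σ x)
    (hm01 : ∀ r : ℝ, 0 ≤ r → 0 < m r ∧ m r < 1)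
    (hmLip : LipschitzOnWith L m (Set.Ici 0))
    (hmmono : StrictMonoOn m (Set.Ici 0))
    (hmlim : Tendsto m atTop (nhds 1))
    (σmax σmin : ℝ)
    (hσmax : IsGreatest (Set.range σ) σmax) (hσmin : IsLeast (Set.range σ) σmin) :
    (∀ (P : Euc N) (u : Euc N → ℝ) (c : ℝ),
        IsCellSolution (fun x p => σ x * m ‖p‖) P u c →
        max (σmin * m ‖P‖) (σmax * m 0) ≤ c ∧ c ≤ σmax * m ‖P‖ ∧ c < σmin) ∧
    (σmin ≤ σmax * m 0 →
        { P : Euc N | ∃ (u : Euc N → ℝ) (a : ℝ),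
            IsCellSolution (fun x p => σ x * m ‖p‖) P u a } = ∅) :=
  critical_value_estimates_noncoercive_general σ m hσc hσpos hm01 hmmono σmax σmin hσmax hσmin
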